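/- Let Ω be a uniform domain with Whitney covering W, 0 < σ < 1, 1 ≤ p = q < ∞, and f ∈ L¹_loc(Ω). Then Σ_{Q∈W} Σ_{L∈W} ∫_L |f(y) − f_L|^p / D(Q,L)^{σp+d} dy · ℓ(Q)^d ≤ C ∫_Ω ∫_Ω |f(x)−f(y)|^p / |x−y|^{σp+d} dy dx, where f_L is the mean of f over L and D is the long distance. -/

import Mathlib

open MeasureTheory ENNReal

/-- An axis-parallel cube in `ℝ^d`, identified with the closed ball of radius `side/2`
around its center in the sup metric on `Fin d → ℝ`. -/
structure Cube (d : ℕ) where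
  center : Fin d → ℝ
  side : ℝ
  side_pos : 0 < side

/-- The set of points of a cube. -/
def Cube.toSet {d : ℕ} (Q : Cube d) : Set (Fin d → ℝ) :=
  Metric.closedBall Q.center (Q.side / 2)

/-- Distance between two sets. -/
noncomputable def setDist {d : ℕ} (A B : Set (Fin d → ℝ)) : ℝ :=
  sInf (Set.image2 dist A B)

/-- The long distance `D(Q,S) = ℓ(Q) + ℓ(S) + dist(Q,S)` between two cubes. -/
noncomputable def longDist {d : ℕ} (Q S : Cube d) : ℝ :=
  Q.side + S.side + setDist Q.toSet S.toSet

/-- A Whitney covering of `Ω`: a family of essentially disjoint (dyadic-type) cubes whose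
union is `Ω`, with side-lengths comparable to the distance to `∂Ω`, and finite
superposition of the dilated cubes `50Q`. -/
structure WhitneyCovering (d : ℕ) (Ω : Set (Fin d → ℝ)) where
  cubes : Set (Cube d)
  covers : (⋃ Q ∈ cubes, Q.toSet) = Ω
  essDisjoint : ∀ Q ∈ cubes, ∀ S ∈ cubes, Q ≠ S →
    interior Q.toSet ∩ interior S.toSet = ∅
  CW : ℝ
  one_le_CW : 1 ≤ CW
  dist_lb : ∀ Q ∈ cubes, CW * Q.side ≤ setDist Q.toSet (frontier Ω)
  dist_ub : ∀ Q ∈ cubes, setDist Q.toSet (frontier Ω) ≤ 4 * CW * Q.side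
  finiteOverlap : ∃ N : ℕ, ∀ x : Fin d → ℝ,
    {Q ∈ cubes | x ∈ Metric.closedBall Q.center (25 * Q.side)}.Finite ∧
    {Q ∈ cubes | x ∈ Metric.closedBall Q.center (25 * Q.side)}.ncard ≤ N

/-- `S ∈ SH_ρ(P)` : the cube `S` of the covering lies in the `ρ`-shadow of `P`, i.e.
`S ⊆ B(x_P, ρ ℓ(P))`. -/
def memShadow {d : ℕ} {Ω : Set (Fin d → ℝ)} (W : WhitneyCovering d Ω) (ρ : ℝ)
    (S P : Cube d) : Prop :=
  S ∈ W.cubes ∧ P ∈ W.cubes ∧ S.toSet ⊆ Metric.closedBall P.center (ρ * P.side)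

/-- An `ε`-admissible chain of Whitney cubes joining `Q` to `S`. -/
structure AdmissibleChain {d : ℕ} {Ω : Set (Fin d → ℝ)} (W : WhitneyCovering d Ω)
    (ε : ℝ) (Q S : Cube d) where
  M : ℕ
  M_pos : 0 < M
  c : Fin M → Cube d
  mem : ∀ j, c j ∈ W.cubes
  first : c ⟨0, M_pos⟩ = Q
  last : c ⟨M - 1, Nat.sub_lt M_pos Nat.one_pos⟩ = S
  neighbors : ∀ (j : ℕ) (h : j + 1 < M),
    ((c ⟨j, Nat.lt_of_succ_lt h⟩).toSet ∩ (c ⟨j + 1, h⟩).toSet).Nonempty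
  length_le : ∑ j, (c j).side ≤ ε⁻¹ * longDist Q S
  j₀ : Fin M
  growth₁ : ∀ j : Fin M, j ≤ j₀ → ε * longDist Q (c j) ≤ (c j).side
  growth₂ : ∀ j : Fin M, j₀ ≤ j → ε * longDist (c j) S ≤ (c j).side

/-- `Ω` (with Whitney covering `W`) is an `ε`-uniform domain: any two Whitney cubes are
joined by an `ε`-admissible chain. -/
def IsUniformDomain {d : ℕ} {Ω : Set (Fin d → ℝ)} (W : WhitneyCovering d Ω) (ε : ℝ) : Prop :=
  ∀ Q ∈ W.cubes, ∀ S ∈ W.cubes, Nonempty (AdmissibleChain W ε Q S)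

/-- The non-centered Hardy–Littlewood maximal function, taken over cubes
(closed balls in the sup metric on `Fin d → ℝ`) containing `x`. -/
noncomputable def maximal (d : ℕ) (g : (Fin d → ℝ) → ℝ≥0∞) (x : Fin d → ℝ) : ℝ≥0∞ :=
  ⨆ (c : Fin d → ℝ) (r : ℝ) (_ : 0 < r) (_ : x ∈ Metric.closedBall c r),
    (∫⁻ y in Metric.closedBall c r, g y) / volume (Metric.closedBall c r)

/-!
On a single cube `L`, Jensen's inequality and `|y - z| ≤ ℓ(L)` for `y, z ∈ L` give
`∫_L |f - f_L|^p ≤ ℓ(L)^{s-d} ∫_L ∫_L |f(y) - f(z)|^p / |y - z|^s` with `s = σp + d`.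
For `x ∈ Q` one has `ℓ(L) + |x - x_L| ≤ 2 D(Q,L)`; as the Whitney cubes are essentially disjoint,
`Σ_Q ℓ(Q)^d D(Q,L)^{-s} ≤ 2^s ∫ (ℓ(L) + |x - x_L|)^{-s} dx = 2^s ℓ(L)^{d-s} ∫ (1 + |u|)^{-s} du`,
and the last integral is finite because `s > d`. The powers of `ℓ(L)` cancel, and the sum over
`L ⊆ Ω` of the double integrals over `L × L` is at most the double integral over `Ω × Ω`.
-/

open Metric

lemma lintegral_comp_smul_of_pos {E : Type*} [NormedAddCommGroup E] [NormedSpace ℝ E]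
    [FiniteDimensional ℝ E] [MeasurableSpace E] [BorelSpace E] (μ : Measure E)
    [μ.IsAddHaarMeasure] (g : E → ℝ≥0∞) {r : ℝ} (hr : 0 < r) :
    ∫⁻ x, g (r • x) ∂μ = ENNReal.ofReal (r ^ Module.finrank ℝ E)⁻¹ * ∫⁻ x, g x ∂μ := by
  calc ∫⁻ x, g (r • x) ∂μ = ∫⁻ x, g x ∂(μ.map (r • ·)) :=
        (lintegral_map_equiv g (MeasurableEquiv.smul₀ r hr.ne')).symm
    _ = ENNReal.ofReal (r ^ Module.finrank ℝ E)⁻¹ * ∫⁻ x, g x ∂μ := by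
        rw [Measure.map_addHaar_smul μ hr.ne', lintegral_smul_measure, smul_eq_mul,
          abs_of_pos (by positivity)]

lemma rpow_lintegral_le_lintegral_rpow_mul {α : Type*} [MeasurableSpace α] (μ : Measure α)
    {g : α → ℝ≥0∞} (hg : AEMeasurable g μ) {p : ℝ} (hp : 1 ≤ p) :
    (∫⁻ x, g x ∂μ) ^ p ≤ (∫⁻ x, g x ^ p ∂μ) * μ Set.univ ^ (p - 1) := by
  rcases hp.eq_or_lt with rfl | hp1
  · simp
  have hp0 : 0 < p := one_pos.trans hp1
  have hHolder := ENNReal.lintegral_mul_le_Lp_mul_Lq μ (Real.HolderConjugate.conjExponent hp1) hg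
    (aemeasurable_const (b := (1 : ℝ≥0∞)))
  simp only [Pi.mul_apply, mul_one, ENNReal.one_rpow, lintegral_const, one_mul] at hHolder
  have hq : 1 / p.conjExponent * p = p - 1 := by
    rw [Real.conjExponent]
    field_simp [sub_ne_zero.2 hp1.ne']
  calc (∫⁻ x, g x ∂μ) ^ p
      ≤ ((∫⁻ x, g x ^ p ∂μ) ^ (1 / p) * μ Set.univ ^ (1 / p.conjExponent)) ^ p :=
        ENNReal.rpow_le_rpow hHolder hp0.le
    _ = (∫⁻ x, g x ^ p ∂μ) * μ Set.univ ^ (p - 1) := by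
        rw [ENNReal.mul_rpow_of_nonneg _ _ hp0.le, ← ENNReal.rpow_mul, ← ENNReal.rpow_mul,
          one_div_mul_cancel hp0.ne', ENNReal.rpow_one, hq]

lemma enorm_sub_setAverage_rpow_le {α E : Type*} [MeasurableSpace α] [NormedAddCommGroup E]
    [NormedSpace ℝ E] [CompleteSpace E] {μ : Measure α} {s : Set α} (hs₀ : μ s ≠ 0) (hs : μ s ≠ ⊤)
    {f : α → E} (hf : IntegrableOn f s μ) {p : ℝ} (hp : 1 ≤ p) (c : E) :
    ‖c - ⨍ x in s, f x ∂μ‖ₑ ^ p ≤ (μ s)⁻¹ * ∫⁻ x in s, ‖c - f x‖ₑ ^ p ∂μ := by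
  have hp0 : 0 < p := one_pos.trans_le hp
  have hconst : IntegrableOn (fun _ => c) s μ := integrableOn_const hs
  have hmean : c - ⨍ x in s, f x ∂μ = (μ s).toReal⁻¹ • ∫ x in s, (c - f x) ∂μ := by
    rw [integral_sub hconst hf, setIntegral_const, smul_sub, setAverage_eq, measureReal_def,
      inv_smul_smul₀ (ENNReal.toReal_ne_zero.2 ⟨hs₀, hs⟩)]
  have hfirst : ‖c - ⨍ x in s, f x ∂μ‖ₑ ≤ (μ s)⁻¹ * ∫⁻ x in s, ‖c - f x‖ₑ ∂μ := by
    rw [hmean, enorm_smul, Real.enorm_of_nonneg (by positivity),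
      ENNReal.ofReal_inv_of_pos (ENNReal.toReal_pos hs₀ hs), ENNReal.ofReal_toReal hs]
    gcongr
    exact enorm_integral_le_lintegral_enorm _
  have hmeas : AEMeasurable (fun x => ‖c - f x‖ₑ) (μ.restrict s) :=
    (hconst.aestronglyMeasurable.sub hf.aestronglyMeasurable).enorm
  calc ‖c - ⨍ x in s, f x ∂μ‖ₑ ^ p
      ≤ ((μ s)⁻¹ * ∫⁻ x in s, ‖c - f x‖ₑ ∂μ) ^ p := ENNReal.rpow_le_rpow hfirst hp0.le
    _ = (μ s)⁻¹ ^ p * (∫⁻ x in s, ‖c - f x‖ₑ ∂μ) ^ p := ENNReal.mul_rpow_of_nonneg _ _ hp0.le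
    _ ≤ (μ s)⁻¹ ^ p * ((∫⁻ x in s, ‖c - f x‖ₑ ^ p ∂μ) * μ s ^ (p - 1)) := by
        grw [rpow_lintegral_le_lintegral_rpow_mul _ hmeas hp, Measure.restrict_apply_univ]
    _ = (μ s)⁻¹ * ∫⁻ x in s, ‖c - f x‖ₑ ^ p ∂μ := by
        rw [mul_comm (∫⁻ _ in s, _ ∂μ), ← mul_assoc, ENNReal.inv_rpow, ← ENNReal.rpow_neg,
          ← ENNReal.rpow_add _ _ hs₀ hs, show -p + (p - 1) = -1 by ring, ENNReal.rpow_neg_one]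

lemma ENNReal.le_mul_div_of_le {a b r : ℝ≥0∞} (hbr : b ≤ r) (hr₀ : r ≠ 0) (hr : r ≠ ⊤) :
    a ≤ r * (a / b) := by
  rcases eq_or_ne b 0 with rfl | hb₀
  · rcases eq_or_ne a 0 with rfl | ha₀
    · exact zero_le
    · rw [ENNReal.div_zero ha₀, ENNReal.mul_top hr₀]
      exact le_top
  calc a = a / b * b := (ENNReal.div_mul_cancel hb₀ (ne_top_of_le_ne_top hr hbr)).symm
    _ ≤ r * (a / b) := by rw [mul_comm]; gcongr

noncomputable def decayIntegral (d : ℕ) (s : ℝ) : ℝ≥0∞ :=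
  ∫⁻ u : Fin d → ℝ, ENNReal.ofReal ((1 + ‖u‖) ^ (-s))

lemma decayIntegral_ne_top {d : ℕ} {s : ℝ} (hs : (d : ℝ) < s) : decayIntegral d s ≠ ⊤ :=
  (integrable_one_add_norm (by rwa [Module.finrank_fin_fun])).lintegral_lt_top.ne

lemma lintegral_add_dist_rpow_neg {d : ℕ} {a : ℝ} (ha : 0 < a) (s : ℝ) (c : Fin d → ℝ) :
    ∫⁻ x, ENNReal.ofReal ((a + dist x c) ^ (-s)) =
      ENNReal.ofReal (a ^ ((d : ℝ) - s)) * decayIntegral d s := by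
  have hscale : ∀ u : Fin d → ℝ, ENNReal.ofReal ((a + ‖a • u‖) ^ (-s)) =
      ENNReal.ofReal (a ^ (-s)) * ENNReal.ofReal ((1 + ‖u‖) ^ (-s)) := fun u => by
    rw [norm_smul, Real.norm_of_nonneg ha.le, ← mul_one_add, Real.mul_rpow ha.le (by positivity),
      ENNReal.ofReal_mul (by positivity)]
  calc ∫⁻ x, ENNReal.ofReal ((a + dist x c) ^ (-s))
      = ∫⁻ x, ENNReal.ofReal ((a + ‖x‖) ^ (-s)) := by
        simp_rw [dist_eq_norm]
        exact lintegral_sub_right_eq_self (fun x => ENNReal.ofReal ((a + ‖x‖) ^ (-s))) c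
    _ = ∫⁻ x, ENNReal.ofReal ((a + ‖a • a⁻¹ • x‖) ^ (-s)) := by
        congr with x
        rw [smul_inv_smul₀ ha.ne']
    _ = ENNReal.ofReal (a ^ d) * ∫⁻ u, ENNReal.ofReal ((a + ‖a • u‖) ^ (-s)) := by
        rw [lintegral_comp_smul_of_pos (E := Fin d → ℝ) volume
          (fun u => ENNReal.ofReal ((a + ‖a • u‖) ^ (-s))) (inv_pos.2 ha),
          Module.finrank_fin_fun, inv_pow, inv_inv]
    _ = ENNReal.ofReal (a ^ ((d : ℝ) - s)) * decayIntegral d s := by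
        simp_rw [hscale]
        rw [lintegral_const_mul' _ _ ofReal_ne_top, ← mul_assoc,
          ← ENNReal.ofReal_mul (by positivity), ← Real.rpow_natCast, ← Real.rpow_add ha,
          ← sub_eq_add_neg, decayIntegral]

lemma setDist_nonneg {d : ℕ} (A B : Set (Fin d → ℝ)) : 0 ≤ setDist A B :=
  Real.sInf_nonneg <| Set.forall_mem_image2.2 fun _ _ _ _ => dist_nonneg

lemma longDist_pos {d : ℕ} (Q L : Cube d) : 0 < longDist Q L :=
  add_pos_of_pos_of_nonneg (add_pos Q.side_pos L.side_pos) (setDist_nonneg _ _)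

namespace Cube

variable {d : ℕ}

lemma half_side_pos (Q : Cube d) : 0 < Q.side / 2 := half_pos Q.side_pos

lemma toSet_nonempty (Q : Cube d) : Q.toSet.Nonempty :=
  nonempty_closedBall.2 Q.half_side_pos.le

lemma measurableSet_toSet (Q : Cube d) : MeasurableSet Q.toSet := measurableSet_closedBall

lemma dist_le_side {Q : Cube d} {x y : Fin d → ℝ} (hx : x ∈ Q.toSet) (hy : y ∈ Q.toSet) :
    dist x y ≤ Q.side :=
  calc dist x y ≤ dist x Q.center + dist y Q.center := dist_triangle_right _ _ _
    _ ≤ Q.side / 2 + Q.side / 2 := add_le_add hx hy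
    _ = Q.side := add_halves _

lemma volume_toSet (Q : Cube d) : volume Q.toSet = ENNReal.ofReal (Q.side ^ (d : ℝ)) := by
  rw [Cube.toSet, Real.volume_pi_closedBall _ Q.half_side_pos.le, Fintype.card_fin,
    mul_div_cancel₀ _ two_ne_zero, Real.rpow_natCast]

lemma toSet_ae_eq_ball (Q : Cube d) : Q.toSet =ᵐ[volume] ball Q.center (Q.side / 2) := by
  refine (ae_eq_of_subset_of_measure_ge ball_subset_closedBall ?_
    measurableSet_ball.nullMeasurableSet measure_closedBall_lt_top.ne).symm
  rw [Real.volume_pi_closedBall _ Q.half_side_pos.le,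
    Real.volume_pi_ball _ Q.half_side_pos]

lemma side_add_dist_center_le_two_mul_longDist {Q L : Cube d} {x : Fin d → ℝ}
    (hx : x ∈ Q.toSet) : L.side + dist x L.center ≤ 2 * longDist Q L := by
  have hdist : dist x L.center - Q.side - L.side / 2 ≤ setDist Q.toSet L.toSet := by
    refine le_csInf (Q.toSet_nonempty.image2 L.toSet_nonempty) ?_
    rintro _ ⟨a, ha, b, hb, rfl⟩
    have hxa := dist_le_side hx ha
    have hbL : dist b L.center ≤ L.side / 2 := hb
    linarith [dist_triangle4 x a b L.center]
  unfold longDist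
  linarith [setDist_nonneg Q.toSet L.toSet, Q.side_pos, L.side_pos]

lemma edist_rpow_le {Q : Cube d} {x y : Fin d → ℝ} (hx : x ∈ Q.toSet) (hy : y ∈ Q.toSet)
    {s : ℝ} (hs : 0 ≤ s) : edist x y ^ s ≤ ENNReal.ofReal (Q.side ^ s) := by
  rw [edist_dist, ENNReal.ofReal_rpow_of_nonneg dist_nonneg hs]
  exact ENNReal.ofReal_le_ofReal (Real.rpow_le_rpow dist_nonneg (dist_le_side hx hy) hs)

lemma lintegral_enorm_sub_setAverage_rpow_le (L : Cube d) {f : (Fin d → ℝ) → ℝ}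
    (hf : IntegrableOn f L.toSet) {p s : ℝ} (hp : 1 ≤ p) (hs : 0 ≤ s) :
    ∫⁻ y in L.toSet, ‖f y - ⨍ z in L.toSet, f z‖ₑ ^ p ≤
      ENNReal.ofReal (L.side ^ (s - d)) *
        ∫⁻ y in L.toSet, ∫⁻ z in L.toSet, ‖f y - f z‖ₑ ^ p / edist y z ^ s := by
  have hvol₀ : volume L.toSet ≠ 0 := by
    rw [volume_toSet]; exact (ENNReal.ofReal_pos.2 (Real.rpow_pos_of_pos L.side_pos _)).ne'
  have hvol : volume L.toSet ≠ ⊤ := by rw [volume_toSet]; exact ENNReal.ofReal_ne_top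
  have hside : ENNReal.ofReal (L.side ^ s) ≠ 0 :=
    (ENNReal.ofReal_pos.2 (Real.rpow_pos_of_pos L.side_pos s)).ne'
  have hconst : (volume L.toSet)⁻¹ * ENNReal.ofReal (L.side ^ s) =
      ENNReal.ofReal (L.side ^ (s - d)) := by
    rw [volume_toSet, ← ENNReal.ofReal_inv_of_pos (Real.rpow_pos_of_pos L.side_pos _),
      ← ENNReal.ofReal_mul (inv_nonneg.2 (Real.rpow_nonneg L.side_pos.le _)),
      ← Real.rpow_neg L.side_pos.le, ← Real.rpow_add L.side_pos, neg_add_eq_sub]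
  calc ∫⁻ y in L.toSet, ‖f y - ⨍ z in L.toSet, f z‖ₑ ^ p
      ≤ ∫⁻ y in L.toSet, (volume L.toSet)⁻¹ * ∫⁻ z in L.toSet, ‖f y - f z‖ₑ ^ p :=
        lintegral_mono fun y => enorm_sub_setAverage_rpow_le hvol₀ hvol hf hp (f y)
    _ ≤ ∫⁻ y in L.toSet, (volume L.toSet)⁻¹ *
          (ENNReal.ofReal (L.side ^ s) * ∫⁻ z in L.toSet, ‖f y - f z‖ₑ ^ p / edist y z ^ s) := by
        refine setLIntegral_mono' L.measurableSet_toSet fun y hy => ?_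
        rw [← lintegral_const_mul' _ _ ENNReal.ofReal_ne_top]
        refine mul_le_mul_right (setLIntegral_mono' L.measurableSet_toSet fun z hz => ?_) _
        exact ENNReal.le_mul_div_of_le (edist_rpow_le hy hz hs) hside ENNReal.ofReal_ne_top
    _ = ENNReal.ofReal (L.side ^ (s - d)) *
          ∫⁻ y in L.toSet, ∫⁻ z in L.toSet, ‖f y - f z‖ₑ ^ p / edist y z ^ s := by
        simp_rw [← mul_assoc, hconst]
        exact lintegral_const_mul' _ _ ENNReal.ofReal_ne_top

lemma ofReal_side_rpow_div_longDist_le (Q L : Cube d) {s : ℝ} (hs : 0 ≤ s) :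
    ENNReal.ofReal (Q.side ^ (d : ℝ)) / ENNReal.ofReal (longDist Q L ^ s) ≤
      ENNReal.ofReal (2 ^ s) *
        ∫⁻ x in Q.toSet, ENNReal.ofReal ((L.side + dist x L.center) ^ (-s)) := by
  have hD := longDist_pos Q L
  have hterm : ENNReal.ofReal (Q.side ^ (d : ℝ)) / ENNReal.ofReal (longDist Q L ^ s) =
      ENNReal.ofReal (2 ^ s) * (ENNReal.ofReal ((2 * longDist Q L) ^ (-s)) * volume Q.toSet) := by
    rw [Q.volume_toSet, ← ENNReal.ofReal_mul (by positivity),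
      ← ENNReal.ofReal_mul (by positivity), ← ENNReal.ofReal_div_of_pos (by positivity),
      Real.mul_rpow zero_le_two hD.le, Real.rpow_neg zero_le_two, Real.rpow_neg hD.le]
    congr 1
    field_simp
  rw [hterm, ← setLIntegral_const]
  refine mul_le_mul_right
    (setLIntegral_mono' Q.measurableSet_toSet fun x hx => ENNReal.ofReal_le_ofReal ?_) _
  exact Real.rpow_le_rpow_of_nonpos (add_pos_of_pos_of_nonneg L.side_pos dist_nonneg)
    (side_add_dist_center_le_two_mul_longDist hx) (neg_nonpos.2 hs)

end Cube

namespace WhitneyCovering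

variable {d : ℕ} {Ω : Set (Fin d → ℝ)} (W : WhitneyCovering d Ω)

lemma toSet_subset {Q : Cube d} (hQ : Q ∈ W.cubes) : Q.toSet ⊆ Ω :=
  W.covers ▸ Set.subset_biUnion_of_mem (u := Cube.toSet) hQ

lemma tsum_setLIntegral_le (g : (Fin d → ℝ) → ℝ≥0∞) :
    ∑' Q : {Q : Cube d // Q ∈ W.cubes}, ∫⁻ x in (Q : Cube d).toSet, g x ≤ ∫⁻ x in Ω, g x := by
  rw [ENNReal.tsum_eq_iSup_sum]
  refine iSup_le fun F => ?_
  calc ∑ Q ∈ F, ∫⁻ x in (Q : Cube d).toSet, g x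
      = ∑ Q ∈ F, ∫⁻ x in ball (Q : Cube d).center ((Q : Cube d).side / 2), g x :=
        Finset.sum_congr rfl fun Q _ => setLIntegral_congr (Q : Cube d).toSet_ae_eq_ball
    _ = ∫⁻ x in ⋃ Q ∈ F, ball (Q : Cube d).center ((Q : Cube d).side / 2), g x := by
        refine (lintegral_biUnion_finset (fun Q _ S _ hQS => ?_)
          (fun _ _ => measurableSet_ball) g).symm
        refine Set.disjoint_iff_inter_eq_empty.2 (Set.subset_eq_empty ?_
          (W.essDisjoint _ Q.2 _ S.2 (Subtype.coe_ne_coe.2 hQS)))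
        exact Set.inter_subset_inter ball_subset_interior_closedBall
          ball_subset_interior_closedBall
    _ ≤ ∫⁻ x in Ω, g x :=
        lintegral_mono_set <| Set.iUnion₂_subset fun Q _ =>
          ball_subset_closedBall.trans (W.toSet_subset Q.2)

lemma tsum_setLIntegral_setLIntegral_le (h : (Fin d → ℝ) → (Fin d → ℝ) → ℝ≥0∞) :
    ∑' L : {L : Cube d // L ∈ W.cubes},
        ∫⁻ y in (L : Cube d).toSet, ∫⁻ z in (L : Cube d).toSet, h y z ≤
      ∫⁻ y in Ω, ∫⁻ z in Ω, h y z :=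
  (ENNReal.tsum_le_tsum fun L =>
    lintegral_mono fun _ => lintegral_mono_set (W.toSet_subset L.2)).trans
    (W.tsum_setLIntegral_le _)

lemma tsum_ofReal_side_rpow_div_longDist_le (L : Cube d) {s : ℝ} (hs : 0 ≤ s) :
    ∑' Q : {Q : Cube d // Q ∈ W.cubes}, ENNReal.ofReal ((Q : Cube d).side ^ (d : ℝ)) /
        ENNReal.ofReal (longDist (Q : Cube d) L ^ s) ≤
      ENNReal.ofReal (2 ^ s) * (ENNReal.ofReal (L.side ^ ((d : ℝ) - s)) * decayIntegral d s) :=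
  calc _ ≤ ∑' Q : {Q : Cube d // Q ∈ W.cubes}, ENNReal.ofReal (2 ^ s) *
        ∫⁻ x in (Q : Cube d).toSet, ENNReal.ofReal ((L.side + dist x L.center) ^ (-s)) :=
        ENNReal.tsum_le_tsum fun Q => Cube.ofReal_side_rpow_div_longDist_le (Q : Cube d) L hs
    _ ≤ ENNReal.ofReal (2 ^ s) * ∫⁻ x, ENNReal.ofReal ((L.side + dist x L.center) ^ (-s)) := by
        rw [ENNReal.tsum_mul_left]
        exact mul_le_mul_right ((W.tsum_setLIntegral_le
          fun x => ENNReal.ofReal ((L.side + dist x L.center) ^ (-s))).trans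
            (setLIntegral_le_lintegral _ _)) _
    _ = _ := by rw [lintegral_add_dist_rpow_neg L.side_pos]

lemma lintegral_enorm_sub_setAverage_rpow_mul_tsum_le (L : Cube d) {f : (Fin d → ℝ) → ℝ}
    (hf : IntegrableOn f L.toSet) {p s : ℝ} (hp : 1 ≤ p) (hs : 0 ≤ s) :
    (∫⁻ y in L.toSet, ‖f y - ⨍ z in L.toSet, f z‖ₑ ^ p) *
        ∑' Q : {Q : Cube d // Q ∈ W.cubes}, ENNReal.ofReal ((Q : Cube d).side ^ (d : ℝ)) /
          ENNReal.ofReal (longDist (Q : Cube d) L ^ s) ≤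
      ENNReal.ofReal (2 ^ s) * decayIntegral d s *
        ∫⁻ y in L.toSet, ∫⁻ z in L.toSet, ‖f y - f z‖ₑ ^ p / edist y z ^ s := by
  have hcancel :
      ENNReal.ofReal (L.side ^ (s - d)) * ENNReal.ofReal (L.side ^ ((d : ℝ) - s)) = 1 := by
    rw [← ENNReal.ofReal_mul (Real.rpow_nonneg L.side_pos.le _), ← Real.rpow_add L.side_pos,
      sub_add_sub_cancel, sub_self, Real.rpow_zero, ENNReal.ofReal_one]
  calc _ ≤ (ENNReal.ofReal (L.side ^ (s - d)) *
          ∫⁻ y in L.toSet, ∫⁻ z in L.toSet, ‖f y - f z‖ₑ ^ p / edist y z ^ s) *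
        (ENNReal.ofReal (2 ^ s) * (ENNReal.ofReal (L.side ^ ((d : ℝ) - s)) * decayIntegral d s)) :=
      mul_le_mul' (L.lintegral_enorm_sub_setAverage_rpow_le hf hp hs)
        (W.tsum_ofReal_side_rpow_div_longDist_le L hs)
    _ = ENNReal.ofReal (2 ^ s) * decayIntegral d s *
          (∫⁻ y in L.toSet, ∫⁻ z in L.toSet, ‖f y - f z‖ₑ ^ p / edist y z ^ s) *
          (ENNReal.ofReal (L.side ^ (s - d)) * ENNReal.ofReal (L.side ^ ((d : ℝ) - s))) := by
      ring
    _ = _ := by rw [hcancel, mul_one]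

end WhitneyCovering

theorem stmt_12_general (d : ℕ) (σ p ε : ℝ) (hσ0 : 0 < σ) (hp : 1 ≤ p) :
    ∃ C : ℝ≥0∞, C ≠ ⊤ ∧
      ∀ (Ω : Set (Fin d → ℝ)), IsOpen Ω → IsConnected Ω → Ω ≠ Set.univ →
      ∀ (W : WhitneyCovering d Ω), IsUniformDomain W ε →
      ∀ f : (Fin d → ℝ) → ℝ, MeasureTheory.LocallyIntegrableOn f Ω volume →
      (∑' Q : {Q : Cube d // Q ∈ W.cubes}, ∑' L : {L : Cube d // L ∈ W.cubes},
          (∫⁻ y in (L : Cube d).toSet,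
              (‖f y - ⨍ z in (L : Cube d).toSet, f z‖₊ : ℝ≥0∞) ^ p /
                ENNReal.ofReal (longDist (Q : Cube d) (L : Cube d) ^ (σ * p + d))) *
            ENNReal.ofReal ((Q : Cube d).side ^ (d : ℝ))) ≤
        C * ∫⁻ x in Ω, ∫⁻ y in Ω,
            (‖f x - f y‖₊ : ℝ≥0∞) ^ p / edist x y ^ (σ * p + d) := by
  have hσp : 0 < σ * p := mul_pos hσ0 (one_pos.trans_le hp)
  have hs : 0 ≤ σ * p + d := by positivity
  refine ⟨ENNReal.ofReal (2 ^ (σ * p + d)) * decayIntegral d (σ * p + d),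
    ENNReal.mul_ne_top ENNReal.ofReal_ne_top (decayIntegral_ne_top (lt_add_of_pos_left _ hσp)), ?_⟩
  intro Ω _ _ _ W _ f hf
  simp only [← enorm_eq_nnnorm]
  calc _ = ∑' L : {L : Cube d // L ∈ W.cubes},
        (∫⁻ y in (L : Cube d).toSet, ‖f y - ⨍ z in (L : Cube d).toSet, f z‖ₑ ^ p) *
          ∑' Q : {Q : Cube d // Q ∈ W.cubes}, ENNReal.ofReal ((Q : Cube d).side ^ (d : ℝ)) /
            ENNReal.ofReal (longDist (Q : Cube d) (L : Cube d) ^ (σ * p + d)) := by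
        rw [ENNReal.tsum_comm]
        refine tsum_congr fun L => ?_
        rw [← ENNReal.tsum_mul_left]
        refine tsum_congr fun Q => ?_
        simp_rw [div_eq_mul_inv]
        rw [lintegral_mul_const' _ _ (ENNReal.inv_ne_top.2 (ENNReal.ofReal_pos.2
          (Real.rpow_pos_of_pos (longDist_pos _ _) _)).ne')]
        ring
    _ ≤ ∑' L : {L : Cube d // L ∈ W.cubes}, ENNReal.ofReal (2 ^ (σ * p + d)) *
          decayIntegral d (σ * p + d) * ∫⁻ y in (L : Cube d).toSet,
            ∫⁻ z in (L : Cube d).toSet, ‖f y - f z‖ₑ ^ p / edist y z ^ (σ * p + d) :=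
        ENNReal.tsum_le_tsum fun L => W.lintegral_enorm_sub_setAverage_rpow_mul_tsum_le L
          (hf.integrableOn_compact_subset (W.toSet_subset L.2) (isCompact_closedBall _ _)) hp hs
    _ ≤ _ := by
        rw [ENNReal.tsum_mul_left]
        exact mul_le_mul_right (W.tsum_setLIntegral_setLIntegral_le _) _

/-- case `p = q` of the control of nonlocal sums: for a uniform domain `Ω`
with Whitney covering `W`, `0 < σ < 1`, `1 ≤ p < ∞` and `f ∈ L¹_loc(Ω)`,
`Σ_{Q∈W} Σ_{L∈W} ∫_L |f − f_L|^p / D(Q,L)^{σp+d} · ℓ(Q)^d ≤ C ‖f‖^p_{Ȧ^σ_{p,p}(Ω)}`. -/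
theorem stmt_12 (d : ℕ) (hd : 1 ≤ d) (σ p ε : ℝ) (hσ0 : 0 < σ) (hσ1 : σ < 1)
    (hp : 1 ≤ p) (hε : 0 < ε) :
    ∃ C : ℝ≥0∞, C ≠ ⊤ ∧
      ∀ (Ω : Set (Fin d → ℝ)), IsOpen Ω → IsConnected Ω → Ω ≠ Set.univ →
      ∀ (W : WhitneyCovering d Ω), IsUniformDomain W ε →
      ∀ f : (Fin d → ℝ) → ℝ, MeasureTheory.LocallyIntegrableOn f Ω volume →
      (∑' Q : {Q : Cube d // Q ∈ W.cubes}, ∑' L : {L : Cube d // L ∈ W.cubes},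
          (∫⁻ y in (L : Cube d).toSet,
              (‖f y - ⨍ z in (L : Cube d).toSet, f z‖₊ : ℝ≥0∞) ^ p /
                ENNReal.ofReal (longDist (Q : Cube d) (L : Cube d) ^ (σ * p + d))) *
            ENNReal.ofReal ((Q : Cube d).side ^ (d : ℝ))) ≤
        C * ∫⁻ x in Ω, ∫⁻ y in Ω,
            (‖f x - f y‖₊ : ℝ≥0∞) ^ p / edist x y ^ (σ * p + d) :=
  stmt_12_general d σ p ε hσ0 hp
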